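/- arXiv:2301.09160 — 6 statements merged into one kernel-verified Lean document; each statement's English description precedes it below -/
import Mathlib

section
/- Let C be a commutative ring, J a prime ideal of C, and b ∈ C/J such that Spec((C/J)_b) → Spec(C) is an open immersion via the natural map. If s ∈ C is any lift of b, then there exists a splitting of rings C_s ≅ (C/J)_b × B' for some ring B'. -/
/-!
`C_s → (C/J)_b` is surjective, and it is étale because its `Spec` is an open immersion. The kernel
of a surjective étale map is finitely generated and idempotent, hence generated by an idempotent
`e`, and `C_s ≅ C_s/(e) × C_s/(1 - e) = (C/J)_b × C_s/(1 - e)`.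
-/

open AlgebraicGeometry CategoryTheory

universe u

theorem RingHom.Etale.exists_isIdempotentElem_ker_eq_span {R S : Type*} [CommRing R] [CommRing S]
    {f : R →+* S} (hf : f.Etale) (hsurj : Function.Surjective f) :
    ∃ e : R, IsIdempotentElem e ∧ RingHom.ker f = Ideal.span {e} := by
  algebraize [f]
  have hfg : (RingHom.ker f).FG :=
    Algebra.FinitePresentation.ker_fG_of_surjective (Algebra.ofId R S) hsurj
  exact (Ideal.isIdempotentElem_iff_of_fg _ hfg).mp
    ((Algebra.FormallyEtale.iff_of_surjective hsurj).mp inferInstance)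

noncomputable def RingHom.equivProdOfKerEqSpan {R S : Type*} [CommRing R] [CommRing S]
    {f : R →+* S} (hsurj : Function.Surjective f) {e : R} (he : IsIdempotentElem e)
    (hker : RingHom.ker f = Ideal.span {e}) :
    R ≃+* S × (R ⧸ Ideal.span {1 - e}) :=
  (AlgEquiv.prodQuotientOfIsIdempotentElem R he he.one_sub (add_sub_cancel e 1)
      (by rw [mul_sub, mul_one, he.eq, sub_self])).toRingEquiv.trans
    (RingEquiv.prodCongr ((Ideal.quotEquivOfEq hker.symm).trans
      (RingHom.quotientKerEquivOfSurjective hsurj)) (RingEquiv.refl _))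

theorem RingHom.Etale.exists_ringEquiv_prod_of_surjective {R S : Type u} [CommRing R]
    [CommRing S] {f : R →+* S} (hf : f.Etale) (hsurj : Function.Surjective f) :
    ∃ (B : Type u) (_ : CommRing B), Nonempty (R ≃+* S × B) := by
  obtain ⟨e, he, hker⟩ := hf.exists_isIdempotentElem_ker_eq_span hsurj
  exact ⟨_, _, ⟨RingHom.equivProdOfKerEqSpan hsurj he hker⟩⟩

theorem RingHom.etale_of_isOpenImmersion_Spec_map {R S : CommRingCat.{u}} {f : R ⟶ S}
    (hf : IsOpenImmersion (Spec.map f)) : f.hom.Etale :=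
  (HasRingHomProperty.Spec_iff (P := @AlgebraicGeometry.Etale)).mp inferInstance

theorem Localization.awayMap_surjective_of_surjective {R S : Type*} [CommRing R] [CommRing S]
    {f : R →+* S} (hf : Function.Surjective f) (r : R) :
    Function.Surjective (Localization.awayMap f r) :=
  Localization.awayMap_surjective_iff.mpr fun a ↦
    let ⟨b, hb⟩ := hf a
    ⟨b, 0, by rw [pow_zero, one_mul, hb]⟩

theorem stmt1_general (C : Type) [CommRing C] (J : Ideal C)
    (b : C ⧸ J)
    (h : IsOpenImmersion (Spec.map (CommRingCat.ofHom
      ((algebraMap (C ⧸ J) (Localization.Away b)).comp (Ideal.Quotient.mk J)))))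
    (s : C) (hs : Ideal.Quotient.mk J s = b) :
    ∃ (B' : Type) (_ : CommRing B'),
      Nonempty (Localization.Away s ≃+* Localization.Away b × B') := by
  subst hs
  set ψ := Localization.awayMap (Ideal.Quotient.mk J) s
  have hψ : IsOpenImmersion (Spec.map (CommRingCat.ofHom ψ)) := by
    have hcomp : ψ.comp (algebraMap C (Localization.Away s)) =
        (algebraMap _ _).comp (Ideal.Quotient.mk J) := IsLocalization.map_comp _
    rw [← hcomp, CommRingCat.ofHom_comp, Spec.map_comp] at h
    exact .of_comp _ (Spec.map (CommRingCat.ofHom (algebraMap C (Localization.Away s))))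
  exact (RingHom.etale_of_isOpenImmersion_Spec_map hψ).exists_ringEquiv_prod_of_surjective
    (Localization.awayMap_surjective_of_surjective Ideal.Quotient.mk_surjective s)

/-- if `Spec((C/J)_b) → Spec C` is an open immersion and `s ∈ C` lifts `b`,
then the localization `C_s` splits as a product `(C/J)_b × B'`. -/
theorem stmt1 (C : Type) [CommRing C] (J : Ideal C) (hp : J.IsPrime)
    (b : C ⧸ J)
    (h : IsOpenImmersion (Spec.map (CommRingCat.ofHom
      ((algebraMap (C ⧸ J) (Localization.Away b)).comp (Ideal.Quotient.mk J)))))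
    (s : C) (hs : Ideal.Quotient.mk J s = b) :
    ∃ (B' : Type) (_ : CommRing B'),
      Nonempty (Localization.Away s ≃+* Localization.Away b × B') :=
  stmt1_general C J b h s hs
end

section
/- Let A be a commutative ring, I an ideal with C = A/I, a ∈ A with image c in C, and suppose J := ∪_n Ann_C(c^n) equals Ann_C(c). Let A' = A[I/a] ⊆ A_a and let I' = a^{-1}I ⊆ A' be the ideal of elements x ∈ A' with ax ∈ I·A'. Then the kernel of the natural surjection A' → C/J equals I'. -/
/-!
Modulo `I·A'`, multiplication by `a` sends every element of `A' = A[I/a]` into `A`: for each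
`x ∈ A'` there is `α ∈ A` with `a(x - α) ∈ I·A'`, since the elements with this property form a
subalgebra containing the generators `t/a`. As `a` becomes a unit in `C_c` and `I` dies there,
`x` and `α` have the same image in `C_c`, and `a·x ∈ I·A'` iff `a·α ∈ I`, i.e. iff `c·ᾱ = 0`.
The hypothesis `Ann(cⁿ) = Ann(c)` says precisely that the kernel of `C → C_c` is `Ann(c)`.
-/

open Algebra

section BlowupChart

variable {A B : Type*} [CommRing A] [CommRing B] [Algebra A B]

/-- The affine blowup algebra `A[I/a] ⊆ B`. -/
def blowupChart (I : Ideal A) (a : A) : Subalgebra A B :=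
  adjoin A {y : B | ∃ t ∈ I, algebraMap A B a * y = algebraMap A B t}

theorem blowupChart.exists_mul_sub_algebraMap_mem (I : Ideal A) (a : A)
    (x : blowupChart (B := B) I a) :
    ∃ α : A, algebraMap A _ a * (x - algebraMap A _ α) ∈
      I.map (algebraMap A (blowupChart I a)) := by
  obtain ⟨x, hx⟩ := x
  induction hx using adjoin_induction with
  | mem y hy =>
    obtain ⟨t, ht, hty⟩ := hy
    refine ⟨0, ?_⟩
    convert Ideal.mem_map_of_mem _ ht using 1
    ext
    simpa using hty
  | algebraMap r =>
    refine ⟨r, ?_⟩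
    convert zero_mem (I.map (algebraMap A (blowupChart (B := B) I a)))
    apply Subtype.ext
    simp
  | add p q hp hq ihp ihq =>
    obtain ⟨α, hα⟩ := ihp
    obtain ⟨β, hβ⟩ := ihq
    refine ⟨α + β, ?_⟩
    convert add_mem hα hβ using 1
    apply Subtype.ext
    push_cast
    ring
  | mul p q hp hq ihp ihq =>
    obtain ⟨α, hα⟩ := ihp
    obtain ⟨β, hβ⟩ := ihq
    refine ⟨α * β, ?_⟩
    convert add_mem (Ideal.mul_mem_left _ ⟨p, hp⟩ hβ) (Ideal.mul_mem_left _ (algebraMap A _ β) hα)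
      using 1
    apply Subtype.ext
    push_cast
    ring

end BlowupChart

theorem map_eq_zero_of_mul_mem_map {A S R : Type*} [CommRing A] [CommRing S] [CommRing R]
    [Algebra A S] (f : S →+* R) {I : Ideal A} {a : A}
    (hI : ∀ t ∈ I, f (algebraMap A S t) = 0) (ha : IsUnit (f (algebraMap A S a))) {u : S}
    (hu : algebraMap A S a * u ∈ I.map (algebraMap A S)) : f u = 0 := by
  have hle : I.map (algebraMap A S) ≤ RingHom.ker f := Ideal.map_le_iff_le_comap.mpr hI
  exact ha.mul_right_eq_zero.mp (by simpa using hle hu)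

theorem algebraMap_away_eq_zero_iff_of_torsionOf_pow {C : Type*} [CommRing C] {c : C}
    (hJ : ⨆ n : ℕ, Ideal.torsionOf C C (c ^ (n + 1)) = Ideal.torsionOf C C c) {y : C} :
    algebraMap C (Localization.Away c) y = 0 ↔ c * y = 0 := by
  rw [IsLocalization.map_eq_zero_iff (Submonoid.powers c)]
  constructor
  · rintro ⟨⟨_, n, rfl⟩, hn⟩
    cases n with
    | zero => simp_all
    | succ n =>
      have hy : y ∈ ⨆ n : ℕ, Ideal.torsionOf C C (c ^ (n + 1)) :=
        Ideal.mem_iSup_of_mem n <| (Ideal.mem_torsionOf_iff _ _).mpr <| by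
          rwa [smul_eq_mul, mul_comm]
      rwa [hJ, Ideal.mem_torsionOf_iff, smul_eq_mul, mul_comm] at hy
  · exact fun h => ⟨⟨c, Submonoid.mem_powers c⟩, h⟩

/-- with `C = A/I`, `c` the image of `a`, assume `⋃ₙ Ann(cⁿ) = Ann(c)`.
Let `A' = A[I/a] ⊆ A_a` (the `a`-chart of the blowup along `I + (a)`).  The natural
surjection `A' → C/J` (induced by the localization map `A_a → C_c`, through which `C/J`
embeds) has kernel `I' = {x ∈ A' : a·x ∈ I·A'}`. -/
theorem stmt3 (A : Type) [CommRing A] (I : Ideal A) (a : A)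
    (hJ : (⨆ n : ℕ, Ideal.torsionOf (A ⧸ I) (A ⧸ I) ((Ideal.Quotient.mk I a) ^ (n + 1)))
        = Ideal.torsionOf (A ⧸ I) (A ⧸ I) (Ideal.Quotient.mk I a))
    (Aa' : Subalgebra A (Localization.Away a))
    (hAa' : Aa' = Algebra.adjoin A {y : Localization.Away a |
      ∃ t ∈ I, algebraMap A (Localization.Away a) a * y
        = algebraMap A (Localization.Away a) t}) :
    ∀ x : Aa',
      (IsLocalization.Away.map (Localization.Away a)
          (Localization.Away (Ideal.Quotient.mk I a)) (Ideal.Quotient.mk I) a)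
          (x : Localization.Away a) = 0
        ↔ algebraMap A Aa' a * x ∈ Ideal.map (algebraMap A Aa') I := by
  intro x
  set φ := (IsLocalization.Away.map (Localization.Away a)
    (Localization.Away (Ideal.Quotient.mk I a)) (Ideal.Quotient.mk I) a).comp
      (Aa'.val : Aa' →+* Localization.Away a)
  have hφ (r : A) : φ (algebraMap A Aa' r) =
      algebraMap (A ⧸ I) (Localization.Away (Ideal.Quotient.mk I a)) (Ideal.Quotient.mk I r) :=
    show IsLocalization.Away.map _ _ _ a (algebraMap A (Localization.Away a) r) = _ from
      IsLocalization.map_eq _ r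
  have hI (t : A) (ht : t ∈ I) : φ (algebraMap A Aa' t) = 0 := by
    rw [hφ, Ideal.Quotient.eq_zero_iff_mem.mpr ht, map_zero]
  have ha : IsUnit (φ (algebraMap A Aa' a)) := by
    rw [hφ]
    exact IsLocalization.Away.algebraMap_isUnit _
  subst hAa'
  obtain ⟨α, hα⟩ := blowupChart.exists_mul_sub_algebraMap_mem I a x
  have hxα : φ x = φ (algebraMap A _ α) := by
    rw [← sub_eq_zero, ← map_sub]
    exact map_eq_zero_of_mul_mem_map φ hI ha hα
  refine ⟨fun hx : φ x = 0 => ?_, map_eq_zero_of_mul_mem_map φ hI ha⟩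
  have haα : a * α ∈ I := by
    rw [hxα, hφ, algebraMap_away_eq_zero_iff_of_torsionOf_pow hJ, ← map_mul] at hx
    exact Ideal.Quotient.eq_zero_iff_mem.mp hx
  have hsplit : algebraMap A _ a * x =
      algebraMap A _ a * (x - algebraMap A _ α) + algebraMap A _ (a * α) := by
    rw [map_mul]
    ring
  rw [hsplit]
  exact add_mem hα (Ideal.mem_map_of_mem _ haα)
end

section
/- Let A be a commutative ring, I an ideal, a ∈ A, and A' = A[I/a] ⊆ A_a the a-chart of the blowing up along I + (a). If a' ∈ A is another element with a' − a ∈ I, then a' = a·u in A' where u = 1 + a^{-1}(a'−a) is an element of A' that is invertible in the localization of A' at any prime containing the ideal a^{-1}I. -/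
/-- in the `a`-chart `A' = A[I/a] ⊆ A_a` of the blowup along `I + (a)`,
if `a' − a ∈ I` then `a' = a·u` where `u = 1 + a⁻¹(a'−a) ∈ A'` is invertible in the
localization of `A'` at every prime containing the ideal `a⁻¹I` (generated by the
elements `t/a`, `t ∈ I`), i.e. `u` lies outside every such prime. -/
theorem stmt4 (A : Type) [CommRing A] (I : Ideal A) (a a' : A) (ha' : a' - a ∈ I)
    (Aa' : Subalgebra A (Localization.Away a))
    (hAa' : Aa' = Algebra.adjoin A {y : Localization.Away a |
      ∃ t ∈ I, algebraMap A (Localization.Away a) a * y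
        = algebraMap A (Localization.Away a) t}) :
    ∃ w : Localization.Away a,
      algebraMap A (Localization.Away a) a * w
        = algebraMap A (Localization.Away a) (a' - a) ∧
      ∃ hu : (1 + w) ∈ Aa',
        algebraMap A (Localization.Away a) a'
          = algebraMap A (Localization.Away a) a * (1 + w) ∧
        ∀ p : Ideal Aa', p.IsPrime →
          Ideal.span {y : Aa' | ∃ t ∈ I,
              algebraMap A (Localization.Away a) a * (y : Localization.Away a)
                = algebraMap A (Localization.Away a) t} ≤ p →
          (⟨1 + w, hu⟩ : Aa') ∉ p := by
  set f := algebraMap A (Localization.Away a)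
  set w : Localization.Away a := f (a' - a) * IsLocalization.Away.invSelf a with hw
  have hinv : f a * IsLocalization.Away.invSelf a = 1 :=
    IsLocalization.Away.mul_invSelf a
  have haw : f a * w = f (a' - a) := by
    rw [hw, ← mul_assoc, mul_comm (f a), mul_assoc, hinv, mul_one]
  have hwmem : w ∈ Aa' := by
    rw [hAa']
    exact Algebra.subset_adjoin ⟨a' - a, ha', haw⟩
  have hu : (1 + w) ∈ Aa' := Aa'.add_mem Aa'.one_mem hwmem
  refine ⟨w, haw, hu, ?_, ?_⟩
  · rw [mul_add, mul_one, haw, ← map_add]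
    ring_nf
  · intro p hp hle hmem
    have hwp : (⟨w, hwmem⟩ : Aa') ∈ p := by
      apply hle
      apply Ideal.subset_span
      exact ⟨a' - a, ha', haw⟩
    have h1 : (1 : Aa') ∈ p := by
      have : (⟨1 + w, hu⟩ : Aa') - ⟨w, hwmem⟩ ∈ p := p.sub_mem hmem hwp
      convert this using 1
      ext
      simp
    exact hp.ne_top (p.eq_top_of_isUnit_mem h1 isUnit_one)
end

section
/- Call a commutative ring A 'generalized Artin' if Spec(A) has exactly one point, equivalently A is local and its maximal ideal equals its nilradical. Let φ: A → B be a ring homomorphism between generalized Artin rings. If B is a finitely generated A-algebra, then φ is finite (B is a finitely generated A-module). -/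
open Polynomial IsLocalRing

lemma zariski_aux {K L : Type} [Field K] [Field L] (ψ : K →+* L) (h : ψ.FiniteType) :
    ψ.IsIntegral := by
  algebraize [ψ]
  haveI : Algebra.FiniteType K L := h
  haveI : Module.Finite K L := finite_of_finite_type_of_isJacobsonRing K L
  exact Algebra.isIntegral_def.mp (Algebra.IsIntegral.of_finite _ _)

/-- a ring homomorphism between generalized Artin rings (local rings whose
maximal ideal is the nilradical, i.e. rings with one-point spectrum) which is of finite
type is finite. -/
theorem stmt6 (A B : Type) [CommRing A] [CommRing B] [IsLocalRing A] [IsLocalRing B]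
    (hA : IsLocalRing.maximalIdeal A = nilradical A)
    (hB : IsLocalRing.maximalIdeal B = nilradical B)
    (φ : A →+* B) (hft : φ.FiniteType) :
    φ.Finite := by
  have hloc : IsLocalHom φ := by
    constructor
    intro a ha
    by_contra h
    have hmem : a ∈ maximalIdeal A := h
    rw [hA] at hmem
    exact ((mem_nilradical.mp hmem).map φ).not_isUnit ha
  set ψ := ResidueField.map φ with hψ
  -- ψ is of finite type
  have hψft : ψ.FiniteType := by
    apply RingHom.FiniteType.of_comp_finiteType (f := residue A)
    rw [ResidueField.map_comp_residue]
    exact RingHom.FiniteType.comp_surjective hft residue_surjective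
  -- by Zariski's lemma, ψ is integral
  have hψint : ψ.IsIntegral := zariski_aux ψ hψft
  -- now φ is integral
  have hint : φ.IsIntegral := by
    intro b
    obtain ⟨p, hpm, hp0⟩ := hψint (residue B b)
    -- lift p to a monic polynomial over A
    have hpl : p ∈ lifts (residue A) := by
      rw [mem_lifts]
      exact (Polynomial.map_surjective _ residue_surjective) p
    obtain ⟨q, hq, _, hqm⟩ := lifts_and_degree_eq_and_monic hpl hpm
    -- the evaluation of q at b is nilpotent
    have hres : residue B (eval₂ φ b q) = 0 := by
      rw [Polynomial.hom_eval₂, ← ResidueField.map_comp_residue φ,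
        ← Polynomial.eval₂_map, hq]
      exact hp0
    have hnil : IsNilpotent (eval₂ φ b q) := by
      rw [← mem_nilradical, ← hB]
      exact (Ideal.Quotient.eq_zero_iff_mem).mp hres
    obtain ⟨n, hn⟩ := hnil
    refine ⟨q ^ (n + 1), hqm.pow _, ?_⟩
    rw [eval₂_pow, pow_succ, hn, zero_mul]
  exact RingHom.finite_iff_isIntegral_and_finiteType.mpr ⟨hint, hft⟩
end

section
/- Let R be a commutative ring, f = t'_0⋯t'_m·v_1^d⋯v_r^d − π ∈ R[t'_0,…,t'_m,v_1,…,v_r] where π ∈ R is a nonzerodivisor, and let v = (v_1⋯v_r)^l for some l > 0. Then in the quotient ring B = R[t'_0,…,t'_m,v_1,…,v_r]/(f), the image of v is a nonzerodivisor: if v·g ∈ (f) for a polynomial g, then g ∈ (f). -/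
open MvPolynomial
open scoped nonZeroDivisors

/-!
A variable `X j` is a nonzerodivisor of `S = R[t', v]`, so its image in `S ⧸ (f)` is a
nonzerodivisor as soon as `f` is a nonzerodivisor modulo `X j`: from `X j * g = f * q` one gets
`X j ∣ q`, say `q = X j * q'`, and then `g = f * q'`. Setting `X j = 0` keeps the constant term
`-π` of `f`, because `t'₀` divides its monomial, and a polynomial whose constant coefficient is
a nonzerodivisor is itself one (McCoy, via power series). Hence each `v_j`, and so `v`, is a
nonzerodivisor in `S ⧸ (f)`.
-/

theorem Ideal.Quotient.mk_mem_nonZeroDivisors_of_dvd_mul {S : Type*} [CommRing S] {x f : S}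
    (hx : IsLeftRegular x) (hf : ∀ q, x ∣ f * q → x ∣ q) :
    Ideal.Quotient.mk (Ideal.span {f}) x ∈ (S ⧸ Ideal.span {f})⁰ := by
  rw [mem_nonZeroDivisors_iff_right]
  intro y hy
  obtain ⟨g, rfl⟩ := Ideal.Quotient.mk_surjective y
  rw [← map_mul, Ideal.Quotient.eq_zero_iff_mem, Ideal.mem_span_singleton] at hy
  rw [Ideal.Quotient.eq_zero_iff_mem, Ideal.mem_span_singleton]
  obtain ⟨q, hq⟩ := hy
  obtain ⟨q', rfl⟩ := hf q ⟨g, by rw [← hq, mul_comm]⟩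
  exact ⟨q', hx (by linear_combination hq)⟩

namespace MvPolynomial

variable {σ R : Type*} [CommRing R]

theorem mem_nonZeroDivisors_of_constantCoeff {p : MvPolynomial σ R}
    (hp : constantCoeff p ∈ R⁰) : p ∈ (MvPolynomial σ R)⁰ :=
  mem_nonZeroDivisors_of_injective (f := coeToMvPowerSeries.ringHom) (coe_injective σ R) <|
    MvPowerSeries.mem_nonZeroDivisors_of_constantCoeff <| by
      rwa [coeToMvPowerSeries.ringHom_apply, ← MvPowerSeries.coeff_zero_eq_constantCoeff_apply,
        coeff_coe, ← constantCoeff_eq]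

theorem X_dvd_of_dvd_mul_of_constantCoeff {p q : MvPolynomial σ R} (i : σ)
    (hp : constantCoeff p ∈ R⁰) (h : X i ∣ p * q) : X i ∣ q := by
  classical
  let ε : MvPolynomial σ R →+* MvPolynomial σ R := eval₂Hom C (Function.update X i 0)
  have hcoeff : constantCoeff.comp ε = constantCoeff := by
    ext j
    · simp [ε]
    · by_cases hj : j = i <;> simp [ε, hj]
  have hmk : (Ideal.Quotient.mk (Ideal.span {X i})).comp ε = Ideal.Quotient.mk _ := by
    ext j
    · simp [ε]
    · by_cases hj : j = i <;> simp [ε, hj]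
  have hεq : ε q = 0 := by
    have hεp : ε p ∈ (MvPolynomial σ R)⁰ := mem_nonZeroDivisors_of_constantCoeff <|
      (RingHom.congr_fun hcoeff p).symm ▸ hp
    obtain ⟨c, hc⟩ := h
    have := congrArg ε hc
    rw [map_mul, map_mul, show ε (X i) = 0 by simp [ε], zero_mul] at this
    exact hεp.1 _ this
  rw [← Ideal.mem_span_singleton, ← Ideal.Quotient.eq_zero_iff_mem, ← hmk]
  simp [hεq]

theorem mk_X_mem_nonZeroDivisors {p : MvPolynomial σ R}
    (hp : constantCoeff p ∈ R⁰) (i : σ) :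
    Ideal.Quotient.mk (Ideal.span {p}) (X i) ∈ (MvPolynomial σ R ⧸ Ideal.span {p})⁰ :=
  Ideal.Quotient.mk_mem_nonZeroDivisors_of_dvd_mul isRegular_X.left fun _ ↦
    X_dvd_of_dvd_mul_of_constantCoeff i hp

end MvPolynomial

theorem stmt10_general (R : Type) [CommRing R] (π : R) (hπ : π ∈ nonZeroDivisors R)
    (m r d l : ℕ)
    (f : MvPolynomial (Fin (m + 1) ⊕ Fin r) R)
    (hf : f = (∏ i : Fin (m + 1), X (Sum.inl i)) *
        (∏ j : Fin r, (X (Sum.inr j) : MvPolynomial (Fin (m + 1) ⊕ Fin r) R) ^ d) - C π)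
    (v : MvPolynomial (Fin (m + 1) ⊕ Fin r) R)
    (hv : v = (∏ j : Fin r, X (Sum.inr j)) ^ l) :
    ∀ g : MvPolynomial (Fin (m + 1) ⊕ Fin r) R,
      v * g ∈ Ideal.span {f} → g ∈ Ideal.span {f} := by
  intro g hg
  have hf₀ : constantCoeff f ∈ R⁰ := by
    have : constantCoeff f = -1 * π := by simp [hf, Fin.prod_univ_succ]
    exact this ▸ mul_mem isUnit_neg_one.mem_nonZeroDivisors hπ
  have hv₀ : Ideal.Quotient.mk (Ideal.span {f}) v ∈ (_ ⧸ Ideal.span {f})⁰ := by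
    rw [hv, map_pow, map_prod]
    exact pow_mem (prod_mem fun j _ ↦ mk_X_mem_nonZeroDivisors hf₀ _) l
  rw [← Ideal.Quotient.eq_zero_iff_mem] at hg ⊢
  exact hv₀.1 _ (by rwa [map_mul] at hg)

/-- in `B = R[t'₀,…,t'_m,v₁,…,v_r]/(f)` with
`f = t'₀⋯t'_m·v₁^d⋯v_r^d − π`, `π ∈ R` a nonzerodivisor, the image of `v = (v₁⋯v_r)^l`
(`l > 0`) is a nonzerodivisor: if `v·g ∈ (f)` then `g ∈ (f)`. -/
theorem stmt10 (R : Type) [CommRing R] (π : R) (hπ : π ∈ nonZeroDivisors R)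
    (m r d l : ℕ) (hl : 0 < l)
    (f : MvPolynomial (Fin (m + 1) ⊕ Fin r) R)
    (hf : f = (∏ i : Fin (m + 1), X (Sum.inl i)) *
        (∏ j : Fin r, (X (Sum.inr j) : MvPolynomial (Fin (m + 1) ⊕ Fin r) R) ^ d) - C π)
    (v : MvPolynomial (Fin (m + 1) ⊕ Fin r) R)
    (hv : v = (∏ j : Fin r, X (Sum.inr j)) ^ l) :
    ∀ g : MvPolynomial (Fin (m + 1) ⊕ Fin r) R,
      v * g ∈ Ideal.span {f} → g ∈ Ideal.span {f} :=
  stmt10_general R π hπ m r d l f hf v hv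
end

section
/- Let Q be a finitely generated commutative monoid, P ⊆ Q a submonoid, and suppose Q + P^gp = Q^gp inside the groupification (i.e., for every q ∈ Q^gp there exist q' ∈ Q and p, p' ∈ P with q = q' + p − p'). Then for every q ∈ Q there exists q' ∈ Q such that q + q' ∈ P^gp ∩ Q; if moreover P^gp ∩ Q = P (P is 'exact' in Q), then q + q' ∈ P. -/
/-- let `P ⊆ Q` be submonoids of an abelian group `G`, with `Q` finitely
generated, and suppose `Q + P^gp = Q^gp` (every element of the group generated by `Q` is
of the form `q + p − p'`).  Then every `q ∈ Q` divides an element of `P^gp`: there is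
`q' ∈ Q` with `q + q' ∈ P^gp`; and if moreover `P^gp ∩ Q = P` (`P` exact in `Q`), then
`q + q' ∈ P`. -/
theorem stmt15 (G : Type) [AddCommGroup G] (P Q : AddSubmonoid G)
    (hPQ : P ≤ Q) (hfg : Q.FG)
    (hgen : ∀ g ∈ AddSubgroup.closure (Q : Set G),
      ∃ q ∈ Q, ∃ p ∈ P, ∃ p' ∈ P, g = q + p - p') :
    ∀ q ∈ Q, ∃ q' ∈ Q, q + q' ∈ AddSubgroup.closure (P : Set G) ∧
      ((∀ x ∈ AddSubgroup.closure (P : Set G), x ∈ Q → x ∈ P) → q + q' ∈ P) := by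
  intro q hq
  obtain ⟨q', hq', p, hp, p', hp', heq⟩ :=
    hgen (-q) (neg_mem (AddSubgroup.subset_closure hq))
  refine ⟨q', hq', ?_, ?_⟩
  · have : q + q' = p' - p := by
      rw [show q = -(q' + p - p') from by rw [← heq, neg_neg]]; abel
    rw [this]
    exact sub_mem (AddSubgroup.subset_closure hp') (AddSubgroup.subset_closure hp)
  · intro hexact
    apply hexact
    · have : q + q' = p' - p := by
        rw [show q = -(q' + p - p') from by rw [← heq, neg_neg]]; abel
      rw [this]
      exact sub_mem (AddSubgroup.subset_closure hp') (AddSubgroup.subset_closure hp)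
    · exact add_mem hq hq'
end
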